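/- The generator graph of any finite history over m processes has cutwidth at most 2m²: under the start-time enumeration of operations, every cut is crossed by at most 2m² edges. -/
import Mathlib


/-- An operation with a process, a start time and a return time. -/
structure Op (P : Type*) where
  proc : P
  stime : ℝ
  rtime : ℝ
  wellFormed : stime < rtime

/-- `b` is a direct successor of `a` on process `p` in `H`. -/
def dsuc {P : Type*} (H : Finset (Op P)) (p : P) (a b : Op P) : Prop :=
  b.proc = p ∧ a.rtime < b.stime ∧
    ¬ ∃ c ∈ H, c.proc = p ∧ a.rtime < c.stime ∧ c.rtime < b.stime

open Classical in
/-- The generator graph of a finite history over `m` processes has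
cutwidth at most `2m²`: under the start-time enumeration, every cut
`(L, R)` is crossed by at most `2m²` edges. -/
theorem generator_cutwidth_le {P : Type*} [Fintype P] (m : ℕ)
    (hm : Fintype.card P = m) (H : Finset (Op P))
    (hstimes : ∀ a ∈ H, ∀ b ∈ H, a ≠ b → a.stime ≠ b.stime)
    (hsameproc : ∀ a ∈ H, ∀ b ∈ H, a ≠ b → a.proc = b.proc →
      a.rtime < b.stime ∨ b.rtime < a.stime)
    (E : Op P → Op P → Prop)
    (hE : ∀ a b, E a b → a ∈ H ∧ b ∈ H ∧ dsuc H b.proc a b)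
    (houtdeg : ∀ a ∈ H, (H.filter (fun b => E a b)).card ≤ m)
    (hindeg : ∀ b ∈ H, (H.filter (fun a => E a b)).card ≤ m)
    (L R : Finset (Op P))
    (hunion : ∀ x, x ∈ H ↔ x ∈ L ∨ x ∈ R) (hdisj : Disjoint L R)
    (hcut : ∀ a ∈ L, ∀ b ∈ R, a.stime < b.stime) :
    ((H ×ˢ H).filter (fun p : Op P × Op P => E p.1 p.2 ∧
        ((p.1 ∈ L ∧ p.2 ∈ R) ∨ (p.1 ∈ R ∧ p.2 ∈ L)))).card ≤ 2 * m ^ 2 := by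
  classical
  have hRH : ∀ x ∈ R, x ∈ H := fun x hx => (hunion x).2 (Or.inr hx)
  have hLH : ∀ x ∈ L, x ∈ H := fun x hx => (hunion x).2 (Or.inl hx)
  -- Λ : first operations of each process in R
  set Λ : Finset (Op P) :=
    R.filter (fun b => ∀ c ∈ R, c.proc = b.proc → b.stime ≤ c.stime) with hΛdef
  -- Γ : last operations of each process in L
  set Γ : Finset (Op P) :=
    L.filter (fun a => ∀ c ∈ L, c.proc = a.proc → c.stime ≤ a.stime) with hΓdef
  -- cardinality bounds for Λ and Γ via injectivity of proc
  have hΛcard : Λ.card ≤ m := by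
    rw [← hm, ← Finset.card_univ]
    apply Finset.card_le_card_of_injOn (fun b => b.proc)
      (fun _ _ => Finset.mem_univ _)
    intro b hb b' hb' hpp
    simp only [hΛdef, Finset.mem_coe, Finset.mem_filter] at hb hb'
    by_contra hne
    have h1 := hb.2 b' hb'.1 hpp.symm
    have h2 := hb'.2 b hb.1 hpp
    exact hstimes b (hRH b hb.1) b' (hRH b' hb'.1) hne (le_antisymm h1 h2)
  have hΓcard : Γ.card ≤ m := by
    rw [← hm, ← Finset.card_univ]
    apply Finset.card_le_card_of_injOn (fun b => b.proc)
      (fun _ _ => Finset.mem_univ _)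
    intro b hb b' hb' hpp
    simp only [hΓdef, Finset.mem_coe, Finset.mem_filter] at hb hb'
    by_contra hne
    have h1 := hb.2 b' hb'.1 hpp.symm
    have h2 := hb'.2 b hb.1 hpp
    exact hstimes b (hLH b hb.1) b' (hLH b' hb'.1) hne (le_antisymm h2 h1)
  -- key claim: every cut edge has target in Λ or source in Γ; also no R→L edges
  have key : ∀ a b, E a b →
      ((a ∈ L ∧ b ∈ R) ∨ (a ∈ R ∧ b ∈ L)) → b ∈ Λ ∨ a ∈ Γ := by
    intro a b hab hor
    obtain ⟨haH, hbH, hproc, hrs, hno⟩ := hE a b hab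
    rcases hor with ⟨haL, hbR⟩ | ⟨haR, hbL⟩
    · by_cases hbΛ : b ∈ Λ
      · exact Or.inl hbΛ
      · right
        -- extract a witness c ∈ R, same proc, earlier stime
        simp only [hΛdef, Finset.mem_filter, hbR, true_and, not_forall] at hbΛ
        obtain ⟨c, hcR, hcp, hcs⟩ := hbΛ
        push_neg at hcs
        have hcb : c ≠ b := fun h => by simp [h] at hcs
        have hcrb : c.rtime < b.stime := by
          rcases hsameproc c (hRH c hcR) b hbH hcb hcp with h | h
          · exact h
          · exact absurd hcs (not_lt.2 (le_of_lt (lt_trans b.wellFormed h)))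
        have hca : c.stime ≤ a.rtime := by
          by_contra hlt
          push_neg at hlt
          exact hno ⟨c, hRH c hcR, hcp, hlt, hcrb⟩
        -- show a ∈ Γ
        simp only [hΓdef, Finset.mem_filter]
        refine ⟨haL, fun a' ha'L hpp => ?_⟩
        by_contra hgt
        push_neg at hgt
        have hane : a ≠ a' := fun h => lt_irrefl _ (h ▸ hgt)
        have hra' : a.rtime < a'.stime := by
          rcases hsameproc a haH a' (hLH a' ha'L) hane hpp.symm with h | h
          · exact h
          · exact absurd hgt (not_lt.2 (le_of_lt (lt_trans a'.wellFormed h)))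
        exact absurd (hcut a' ha'L c hcR) (not_lt.2 (le_trans hca (le_of_lt hra')))
    · -- R → L edge is impossible
      exact absurd (hcut b hbL a haR)
        (not_lt.2 (le_of_lt (lt_trans a.wellFormed hrs)))
  -- split the cut set
  set S := (H ×ˢ H).filter (fun p : Op P × Op P => E p.1 p.2 ∧
        ((p.1 ∈ L ∧ p.2 ∈ R) ∨ (p.1 ∈ R ∧ p.2 ∈ L))) with hSdef
  set A := Λ.biUnion (fun b => (H.filter (fun a => E a b)).image (fun a => (a, b)))
    with hAdef
  set B := Γ.biUnion (fun a => (H.filter (fun b => E a b)).image (fun b => (a, b)))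
    with hBdef
  have hsub : S ⊆ A ∪ B := by
    intro p hp
    simp only [hSdef, Finset.mem_filter, Finset.mem_product] at hp
    obtain ⟨⟨h1, h2⟩, hEp, hor⟩ := hp
    rcases key p.1 p.2 hEp hor with h | h
    · refine Finset.mem_union_left _ ?_
      simp only [hAdef, Finset.mem_biUnion]
      exact ⟨p.2, h, by simp [Finset.mem_image, Finset.mem_filter]; exact ⟨p.1, ⟨h1, hEp⟩, rfl⟩⟩
    · refine Finset.mem_union_right _ ?_
      simp only [hBdef, Finset.mem_biUnion]
      exact ⟨p.1, h, by simp [Finset.mem_image, Finset.mem_filter]; exact ⟨p.2, ⟨h2, hEp⟩, rfl⟩⟩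
  have hAcard : A.card ≤ m * m := by
    calc A.card ≤ ∑ b ∈ Λ, ((H.filter (fun a => E a b)).image (fun a => (a, b))).card :=
          Finset.card_biUnion_le
      _ ≤ ∑ b ∈ Λ, m := by
          apply Finset.sum_le_sum
          intro b hb
          calc ((H.filter (fun a => E a b)).image (fun a => (a, b))).card
              ≤ (H.filter (fun a => E a b)).card := Finset.card_image_le
            _ ≤ m := hindeg b (hRH b (Finset.mem_of_mem_filter b hb))
      _ = Λ.card * m := by rw [Finset.sum_const, smul_eq_mul]
      _ ≤ m * m := Nat.mul_le_mul_right m hΛcard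
  have hBcard : B.card ≤ m * m := by
    calc B.card ≤ ∑ a ∈ Γ, ((H.filter (fun b => E a b)).image (fun b => (a, b))).card :=
          Finset.card_biUnion_le
      _ ≤ ∑ a ∈ Γ, m := by
          apply Finset.sum_le_sum
          intro a ha
          calc ((H.filter (fun b => E a b)).image (fun b => (a, b))).card
              ≤ (H.filter (fun b => E a b)).card := Finset.card_image_le
            _ ≤ m := houtdeg a (hLH a (Finset.mem_of_mem_filter a ha))
      _ = Γ.card * m := by rw [Finset.sum_const, smul_eq_mul]
      _ ≤ m * m := Nat.mul_le_mul_right m hΓcard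
  calc S.card ≤ (A ∪ B).card := Finset.card_le_card hsub
    _ ≤ A.card + B.card := Finset.card_union_le _ _
    _ ≤ m * m + m * m := Nat.add_le_add hAcard hBcard
    _ = 2 * m ^ 2 := by ring
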